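/- For every colored tree Γ, the dual cone C(Γ) = {x ∈ ℝ^g : ⟨w_d, x⟩ ≥ 0 for all d ∈ E(Γ)} equals the convex cone generated by G(Γ), i.e. the set of all finite nonnegative real combinations of elements of G(Γ); moreover G(Γ) is a minimal generating set: no proper subset of G(Γ) generates C(Γ) as a convex cone. -/

import Mathlib

noncomputable section
open Classical

/-- A rose tree whose leaves ("colored vertices") carry labels of type `α` and whose
internal vertices ("uncolored vertices") are unlabelled. -/
inductive CTree (α : Type) : Type
  | leaf (a : α) : CTree α
  | node (ts : List (CTree α)) : CTree α

namespace CTree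

variable {α : Type}

/-- The subtree of `t` at a position `p` (a list of child indices), if it exists. -/
def sub : CTree α → List ℕ → Option (CTree α)
  | t, [] => some t
  | leaf _, _ :: _ => none
  | node ts, i :: p =>
      match ts[i]? with
      | some c => sub c p
      | none => none

/-- All lists of natural numbers of length at most `k` with entries `< m`. -/
def allLists (m : ℕ) : ℕ → List (List ℕ)
  | 0 => [[]]
  | k + 1 => [] :: (List.range m).flatMap (fun i => (allLists m k).map (i :: ·))

/-- The finite set of positions of vertices of `t`. -/
def vertS (t : CTree α) : Finset (List ℕ) :=
  (allLists (sizeOf t) (sizeOf t)).toFinset.filter (fun p => (t.sub p).isSome)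

/-- The finite set of positions of uncolored (internal) vertices of `t`. -/
def uncS (t : CTree α) : Finset (List ℕ) :=
  (allLists (sizeOf t) (sizeOf t)).toFinset.filter (fun p => ∃ ts, t.sub p = some (node ts))

/-- The finite set of positions of colored vertices (leaves) of `t`. -/
def colS (t : CTree α) : Finset (List ℕ) :=
  (allLists (sizeOf t) (sizeOf t)).toFinset.filter (fun p => ∃ a, t.sub p = some (leaf a))

/-- Edges of `t` are identified with the positions of non-root vertices (an edge joins
the vertex at `p ≠ []` to its parent at `p.dropLast`). -/
def edgeS (t : CTree α) : Finset (List ℕ) := (vertS t).erase []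

/-- `t` is a colored tree: every internal vertex has at least one child (so the leaves,
i.e. the childless vertices, are exactly the colored vertices) and the root is
uncolored. -/
def IsColoredTree (t : CTree α) : Prop :=
  (∀ p, t.sub p ≠ some (node ([] : List (CTree α)))) ∧ ∃ ts, t = node ts

/-- The weight `w_d ∈ M` of an edge `d`: the sum of the dual basis vectors `e_u^*`
over uncolored vertices `u` that are descendants of the upper endpoint of `d` but not
descendants of the lower endpoint of `d`. -/
def wt (t : CTree α) (d : List ℕ) : List ℕ → ℤ := fun u =>
  if u ∈ uncS t ∧ d.dropLast <+: u ∧ ¬ d <+: u then 1 else 0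

/-- `s_v ∈ M` : the sum of `e_u^*` over the uncolored descendants `u` of `v`;
`s(Γ) = sv t []`. -/
def sv (t : CTree α) (v : List ℕ) : List ℕ → ℤ := fun u =>
  if u ∈ uncS t ∧ v <+: u then 1 else 0

/-- The pairing between `M = Hom(ℤ^g, ℤ)` and `ℤ^g` (both realized as integer-valued
functions on the uncolored vertices of `t`). -/
def pairZ (t : CTree α) (μ x : List ℕ → ℤ) : ℤ := ∑ p ∈ uncS t, μ p * x p

/-- The pairing between `M` and `ℝ^g`. -/
def pairR (t : CTree α) (μ : List ℕ → ℤ) (x : List ℕ → ℝ) : ℝ :=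
  ∑ p ∈ uncS t, (μ p : ℝ) * x p

/-- The multiset of edges of the (downward) path from the vertex `v` to the vertex `c`;
each edge occurs with multiplicity one. -/
def pathEdges (t : CTree α) (v c : List ℕ) : Multiset (List ℕ) :=
  ((edgeS t).filter (fun d => v <+: d ∧ d ≠ v ∧ d <+: c)).val

/-- The relation `A ∼ B` on multisets of edges: `A` and `B` consist exactly of the edges
of two non-self-crossing paths from a common vertex to two colored vertices. -/
def Sim (t : CTree α) (A B : Multiset (List ℕ)) : Prop :=
  ∃ v ∈ vertS t, ∃ c₁ ∈ colS t, ∃ c₂ ∈ colS t, v <+: c₁ ∧ v <+: c₂ ∧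
    A = pathEdges t v c₁ ∧ B = pathEdges t v c₂

/-- `Y` is a minimally complete subset of the set of edges of `t`: every
(non-self-crossing) path from the root to a colored vertex contains exactly one edge
of `Y`. -/
def MinComplete (t : CTree α) (Y : Finset (List ℕ)) : Prop :=
  Y ⊆ edgeS t ∧ ∀ c ∈ colS t, ∃! d, d ∈ Y ∧ d <+: c

/-- The finite set of minimally complete subsets of the edge set of `t`. -/
def MCfin (t : CTree α) : Finset (Finset (List ℕ)) :=
  (edgeS t).powerset.filter (fun Y => MinComplete t Y)

/-- The dual cone `C(Γ) = {x ∈ ℝ^g | ⟨w_d, x⟩ ≥ 0 for all edges d}`. -/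
def dualCone (t : CTree α) : Set (List ℕ → ℝ) :=
  {x | (∀ p, p ∉ uncS t → x p = 0) ∧ ∀ d ∈ edgeS t, 0 ≤ pairR t (wt t d) x}

/-- The ray spanned by a vector `v`. -/
def ray (v : List ℕ → ℝ) : Set (List ℕ → ℝ) := {x | ∃ c : ℝ, 0 ≤ c ∧ x = c • v}

/-- `F` is a one-dimensional face (extreme ray) of the convex cone `C`. -/
def IsOneDimFace (C F : Set (List ℕ → ℝ)) : Prop :=
  F ⊆ C ∧ (∃ v, v ≠ 0 ∧ F = ray v) ∧
    ∀ x ∈ C, ∀ y ∈ C, x + y ∈ F → x ∈ F ∧ y ∈ F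

/-- The convex cone generated by a set `G ⊆ ℤ^g` inside `ℝ^g`: all finite nonnegative
real combinations of elements of `G`. -/
def coneHull (G : Set (List ℕ → ℤ)) : Set (List ℕ → ℝ) :=
  {x | ∃ (F : Finset (List ℕ → ℤ)) (c : (List ℕ → ℤ) → ℝ),
    ↑F ⊆ G ∧ (∀ v ∈ F, 0 ≤ c v) ∧
    x = ∑ v ∈ F, c v • (fun p => ((v p : ℤ) : ℝ))}

/-- `e_{v_0} ∈ ℤ^g`: the basis vector of the root vertex. -/
def e0 : List ℕ → ℤ := fun p => if p = [] then 1 else 0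

/-- The inclusion `ℤ^{g_i} → ℤ^g` corresponding to the `i`-th principal subtree. -/
def shift (i : ℕ) (f : List ℕ → ℤ) : List ℕ → ℤ := fun p =>
  match p with
  | [] => 0
  | j :: q => if j = i then f q else 0

def isNodeB : CTree α → Bool
  | leaf _ => false
  | node _ => true

/-- The recursively defined set `G(Γ) ⊆ ℤ^g`: `G(Γ)` consists of all vectors
`e_{v₀} + ∑_{i ∈ J} (w_i - e_{v₀})` where `J` ranges over subsets of the set of indices
of non-trivial principal subtrees and `w_i ∈ G(Γ_i)` (in particular if `g = 1` this is
just `{e_{v₀}}`). -/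
def Gset : CTree α → Set (List ℕ → ℤ)
  | leaf _ => ∅
  | node ts =>
      {v | ∃ (J : Finset (Fin ts.length)) (w : Fin ts.length → (List ℕ → ℤ)),
        (∀ i ∈ J, (ts.get i).isNodeB = true ∧ w i ∈ Gset (ts.get i)) ∧
        v = e0 + ∑ i ∈ J, (shift i.1 (w i) - e0)}
  termination_by t => sizeOf t
  decreasing_by
    have h1 : ts.get i ∈ ts := List.get_mem ts i
    have h2 := List.sizeOf_lt_of_mem h1
    simp only [CTree.node.sizeOf_spec]
    omega

/-- Transport of a set of edges of `Γ` to the `i`-th principal subtree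
(`Y ∩ E(Γ_i)`, rewritten in the coordinates of `Γ_i`). -/
def sect (i : ℕ) (Y : Finset (List ℕ)) : Finset (List ℕ) :=
  (Y.filter (fun p => p.head? = some i)).image List.tail

/-- The recursively defined vector `v_Y ∈ ℤ^g` attached to a (minimally complete) set
of edges `Y`: `v_Y = e_{v₀} + ∑_{i ∈ I} (v_{Y_i} - e_{v₀})` where
`I = {i | d_i ∉ Y}` and `Y_i = Y ∩ E(Γ_i)` (if `g = 1` this is just `e_{v₀}`). -/
def vY : CTree α → Finset (List ℕ) → (List ℕ → ℤ)
  | leaf _, _ => 0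
  | node ts, Y =>
      e0 + ∑ i ∈ Finset.univ.filter (fun i : Fin ts.length => [i.1] ∉ Y),
        (shift i.1 (vY (ts.get i) (sect i.1 Y)) - e0)
  termination_by t => sizeOf t
  decreasing_by
    have h1 : ts.get i ∈ ts := List.get_mem ts i
    have h2 := List.sizeOf_lt_of_mem h1
    simp only [CTree.node.sizeOf_spec]
    omega

/-- The set of balanced labellings `X(Γ) ⊆ ℂ^{E(Γ)}`. -/
def Xbal (t : CTree α) : Set (List ℕ → ℂ) :=
  {x | ∀ v ∈ uncS t, ∀ c ∈ colS t, ∀ c' ∈ colS t, v <+: c → v <+: c' →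
    ((pathEdges t v c).map x).prod = ((pathEdges t v c').map x).prod}

/-- `Y ⊆ E(Γ)` is complete: for every finite multiset `A` of edges, the monomial
`∏_{d ∈ A} x_d` vanishes identically on `{x ∈ X(Γ) | x_y = 0 ∀ y ∈ Y}` if and only if
`A` contains at least one edge belonging to `Y`. -/
def CompleteSet (t : CTree α) (Y : Finset (List ℕ)) : Prop :=
  ∀ A : Multiset (List ℕ), (∀ d ∈ A, d ∈ edgeS t) →
    ((∀ x ∈ Xbal t, (∀ y ∈ Y, x y = 0) → (A.map x).prod = 0) ↔ ∃ d ∈ A, d ∈ Y)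

/-- A partition of a type `I`: a finite collection of nonempty pairwise disjoint
subsets covering `I`. -/
def IsPart {I : Type} (P : Finset (Finset I)) : Prop :=
  (∀ S ∈ P, S ≠ ∅) ∧ ∀ a : I, ∃! S, S ∈ P ∧ a ∈ S

/-- The tree with a single uncolored vertex whose children are the colored vertices
labelled by the elements of `S`. -/
def blockTree {I : Type} (S : Finset I) : CTree I := node (S.toList.map leaf)

/-- The colored tree `Γ_P` of a partition `P`: the root has one child for each block
`S ∈ P`, an uncolored vertex whose children are colored vertices labelled by the
elements of `S`. -/
def gammaP {I : Type} (P : Finset (Finset I)) : CTree I := node (P.toList.map blockTree)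

/-- A tree homomorphism `t → t'`, described by a map `f` on vertex positions: it sends
root to root, vertices to vertices, the two endpoints of any edge to the two endpoints
of an edge, and restricts to a label-preserving bijection between the colored
vertices. -/
def TreeHom {I : Type} (t t' : CTree I) (f : List ℕ → List ℕ) : Prop :=
  f [] = [] ∧
  (∀ p ∈ vertS t, f p ∈ vertS t') ∧
  (∀ p ∈ vertS t, p ≠ [] →
    (f p ≠ [] ∧ (f p).dropLast = f p.dropLast) ∨
    (f p.dropLast ≠ [] ∧ (f p.dropLast).dropLast = f p)) ∧
  (∀ p a, t.sub p = some (leaf a) → t'.sub (f p) = some (leaf a)) ∧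
  Set.BijOn f {p | ∃ a, t.sub p = some (leaf a)} {q | ∃ a, t'.sub q = some (leaf a)}

/-- A partition `P` of the label set is compatible with the colored tree `t` if there
exists a tree homomorphism `t → Γ_P`. -/
def Compatible {I : Type} (t : CTree I) (P : Finset (Finset I)) : Prop :=
  ∃ f, TreeHom t (gammaP P) f

/-- `C_y ⊆ I` : the labels of the colored vertices whose path from the root contains
the edge `y`. -/
def Cy {I : Type} [Fintype I] [DecidableEq I] (t : CTree I) (y : List ℕ) : Finset I :=
  Finset.univ.filter (fun a => ∃ p, t.sub p = some (leaf a) ∧ y <+: p)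

end CTree

/-!
Write `x_i` for the part of `x` on the `i`-th principal subtree `Γ_i` and `|x|` for its
coordinate sum. The inequalities of the edges inside `Γ_i` say `x_i ∈ C(Γ_i)`, and the one of the
principal branch `d_i` says `|x_i| ≤ |x|`. Every `v ∈ G(Γ)` has `|v| = 1` and branch sums
`|v_i| ∈ {0, 1}`, so `G(Γ) ⊆ C(Γ)` by induction.

Conversely let `x ∈ C(Γ)` and `T = |x|`. By induction each `x_i` lies in the cone of `G(Γ_i)`
with `|x_i| ≤ T`, so it is `T` times a point of `conv ({0} ∪ G(Γ_i))`. Since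
`G(Γ) = e_{v₀} + ∑_i ({0} ∪ {w - e_{v₀} | w ∈ G(Γ_i)})` and the convex hull of a Minkowski sum is
the sum of the convex hulls, `x = T e_{v₀} + ∑_i (x_i - |x_i| e_{v₀})` is `T` times a point of
`conv G(Γ)`.

For minimality, let `v ∈ G(Γ)` be a positive combination of elements `u_j` of `G(Γ)`. Taking
coordinate sums, the coefficients sum to `1`; as branch sums are `0` or `1`, every `u_j` has the
same branch sums as `v`, and where these are `1` the branches of the `u_j` combine to `v_i` inside
`Γ_i`. By induction every `u_j` equals `v`, so no element of `G(Γ)` can be left out.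
-/

namespace CTree

variable {α : Type}

theorem induction_on_children {motive : CTree α → Prop} (leaf : ∀ a, motive (leaf a))
    (node : ∀ ts : List (CTree α), (∀ i : Fin ts.length, motive (ts.get i)) → motive (node ts)) :
    ∀ t, motive t
  | .leaf a => leaf a
  | .node ts => node ts fun i => induction_on_children leaf node (ts.get i)
termination_by t => sizeOf t
decreasing_by
  have := List.sizeOf_lt_of_mem (List.get_mem ts i)
  simp only [CTree.node.sizeOf_spec]
  omega

theorem sub_node_cons (ts : List (CTree α)) (i : Fin ts.length) (p : List ℕ) :
    (node ts).sub (i.1 :: p) = (ts.get i).sub p := by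
  simp [sub]

theorem sub_node_cons_of_le {ts : List (CTree α)} {j : ℕ} (h : ts.length ≤ j) (p : List ℕ) :
    (node ts).sub (j :: p) = none := by
  simp [sub, List.getElem?_eq_none h]

theorem mem_allLists {m : ℕ} : ∀ {k : ℕ} {p : List ℕ}, p.length ≤ k → (∀ j ∈ p, j < m) →
    p ∈ allLists m k
  | 0, [], _, _ => by simp [allLists]
  | k + 1, [], _, _ => by simp [allLists]
  | k + 1, i :: q, hk, hm => by
    simp only [allLists, List.mem_cons, List.mem_flatMap, List.mem_range, List.mem_map]
    exact Or.inr ⟨i, hm i (by simp), q, mem_allLists (by simpa using hk)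
      (fun j hj => hm j (by simp [hj])), rfl⟩

theorem length_le_sizeOf (ts : List (CTree α)) : ts.length ≤ sizeOf ts := by
  induction ts with
  | nil => simp
  | cons a l ih => simp only [List.cons.sizeOf_spec, List.length_cons]; omega

theorem length_le_and_lt_sizeOf_of_sub_isSome {p : List ℕ} :
    ∀ {t : CTree α}, (t.sub p).isSome →
      p.length ≤ sizeOf t ∧ ∀ j ∈ p, j < sizeOf t := by
  induction p with
  | nil => simp
  | cons i q ih =>
    rintro (_ | ts) h
    · simp [sub] at h
    by_cases hi : i < ts.length
    · rw [sub_node_cons ts ⟨i, hi⟩] at h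
      have hc := List.sizeOf_lt_of_mem (List.get_mem ts ⟨i, hi⟩)
      have := length_le_sizeOf ts
      obtain ⟨h1, h2⟩ := ih h
      simp only [CTree.node.sizeOf_spec, List.length_cons, List.mem_cons, forall_eq_or_imp]
      exact ⟨by omega, by omega, fun j hj => by have := h2 j hj; omega⟩
    · simp [sub_node_cons_of_le (not_lt.1 hi)] at h

theorem mem_allLists_of_sub_isSome {t : CTree α} {p : List ℕ} (h : (t.sub p).isSome) :
    p ∈ allLists (sizeOf t) (sizeOf t) :=
  mem_allLists (length_le_and_lt_sizeOf_of_sub_isSome h).1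
    (length_le_and_lt_sizeOf_of_sub_isSome h).2

theorem mem_vertS {t : CTree α} {p : List ℕ} : p ∈ vertS t ↔ (t.sub p).isSome := by
  simpa [vertS] using fun h => mem_allLists_of_sub_isSome h

theorem mem_uncS {t : CTree α} {p : List ℕ} : p ∈ uncS t ↔ ∃ ts, t.sub p = some (node ts) := by
  simp only [uncS, Finset.mem_filter, List.mem_toFinset, and_iff_right_iff_imp]
  rintro ⟨ts, h⟩
  exact mem_allLists_of_sub_isSome (by simp [h])

@[simp]
theorem uncS_leaf (a : α) : uncS (leaf a) = ∅ := by
  ext (_ | _) <;> simp [mem_uncS, sub]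

theorem nil_mem_uncS_node (ts : List (CTree α)) : [] ∈ uncS (node ts) :=
  mem_uncS.2 ⟨ts, rfl⟩

theorem cons_mem_uncS_node {ts : List (CTree α)} {i : Fin ts.length} {q : List ℕ} :
    i.1 :: q ∈ uncS (node ts) ↔ q ∈ uncS (ts.get i) := by
  rw [mem_uncS, mem_uncS, sub_node_cons]

theorem cons_notMem_uncS_node {ts : List (CTree α)} {j : ℕ} (h : ts.length ≤ j) (q : List ℕ) :
    j :: q ∉ uncS (node ts) := by
  simp [mem_uncS, sub_node_cons_of_le h]

theorem uncS_node (ts : List (CTree α)) :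
    uncS (node ts) = insert []
      (Finset.univ.biUnion fun i : Fin ts.length => (uncS (ts.get i)).map
        ⟨List.cons i.1, List.cons_injective⟩) := by
  ext (_ | ⟨j, q⟩)
  · simp [nil_mem_uncS_node]
  by_cases hj : j < ts.length
  · simp only [Finset.mem_insert, reduceCtorEq, Finset.mem_biUnion, Finset.mem_univ,
      Finset.mem_map, Function.Embedding.coeFn_mk, List.cons.injEq, true_and, false_or]
    rw [cons_mem_uncS_node (i := ⟨j, hj⟩)]
    constructor
    · exact fun h => ⟨⟨j, hj⟩, q, h, rfl, rfl⟩
    · rintro ⟨i, r, hr, rfl, rfl⟩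
      exact hr
  · simp only [cons_notMem_uncS_node (not_lt.1 hj), false_iff, Finset.mem_insert,
      reduceCtorEq, Finset.mem_biUnion, Finset.mem_univ, Finset.mem_map,
      Function.Embedding.coeFn_mk, List.cons.injEq, true_and, false_or, not_exists, not_and]
    rintro i r - rfl -
    exact hj i.2

theorem sum_uncS_node {M : Type*} [AddCommMonoid M] (ts : List (CTree α)) (f : List ℕ → M) :
    ∑ p ∈ uncS (node ts), f p =
      f [] + ∑ i : Fin ts.length, ∑ q ∈ uncS (ts.get i), f (i.1 :: q) := by
  rw [uncS_node, Finset.sum_insert, Finset.sum_biUnion]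
  · simp
  · intro i _ j _ hij
    simp only [Function.onFun, Finset.disjoint_left, Finset.mem_map, Function.Embedding.coeFn_mk]
    rintro _ ⟨a, _, rfl⟩ ⟨b, _, h⟩
    exact hij (Fin.ext (List.cons.inj h).1.symm)
  · simp

theorem mem_edgeS_node {ts : List (CTree α)} {d : List ℕ} :
    d ∈ edgeS (node ts) ↔ ∃ i : Fin ts.length, ∃ e ∈ vertS (ts.get i), d = i.1 :: e := by
  rcases d with _ | ⟨j, e⟩
  · simp [edgeS]
  by_cases hj : j < ts.length
  · simp only [edgeS, Finset.mem_erase, ne_eq, reduceCtorEq, not_false_eq_true, true_and,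
      mem_vertS, List.cons.injEq]
    rw [sub_node_cons ts ⟨j, hj⟩]
    constructor
    · exact fun h => ⟨⟨j, hj⟩, e, h, rfl, rfl⟩
    · rintro ⟨i, r, hr, rfl, rfl⟩
      exact hr
  · simp only [edgeS, Finset.mem_erase, mem_vertS, sub_node_cons_of_le (not_lt.1 hj)]
    simp only [Option.isSome_none, Bool.false_eq_true, and_false, false_iff, not_exists, not_and,
      List.cons.injEq]
    rintro i r - rfl -
    exact hj i.2

theorem mem_vertS_iff {t : CTree α} {e : List ℕ} : e ∈ vertS t ↔ e = [] ∨ e ∈ edgeS t := by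
  by_cases h : e = []
  · subst h; simp [mem_vertS, sub]
  · simp [edgeS, h]

def branch {β : Type*} (i : ℕ) (x : List ℕ → β) : List ℕ → β := fun q => x (i :: q)

def castR : (List ℕ → ℤ) →+ (List ℕ → ℝ) := (Int.castAddHom ℝ).compLeft (List ℕ)

@[simp]
theorem castR_apply (v : List ℕ → ℤ) (p : List ℕ) : castR v p = (v p : ℝ) := rfl

theorem branch_castR (i : ℕ) (v : List ℕ → ℤ) : branch i (castR v) = castR (branch i v) := rfl

def total (t : CTree α) : (List ℕ → ℝ) →ₗ[ℝ] ℝ := ∑ p ∈ uncS t, LinearMap.proj p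

theorem total_apply (t : CTree α) (x : List ℕ → ℝ) : total t x = ∑ p ∈ uncS t, x p := by
  simp [total]

theorem total_node (ts : List (CTree α)) (x : List ℕ → ℝ) :
    total (node ts) x = x [] + ∑ i : Fin ts.length, total (ts.get i) (branch i x) := by
  simp only [total_apply, sum_uncS_node, branch]

theorem funext_branch {β : Type*} (n : ℕ) {x y : List ℕ → β} (h0 : x [] = y [])
    (hbranch : ∀ i : Fin n, branch i x = branch i y)
    (hout : ∀ j, n ≤ j → ∀ q, x (j :: q) = y (j :: q)) : x = y := by
  funext p
  rcases p with _ | ⟨j, q⟩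
  · exact h0
  · by_cases hj : j < n
    · exact congrFun (hbranch ⟨j, hj⟩) q
    · exact hout j (not_lt.1 hj) q

theorem shift_eq_extend (i : ℕ) (w : List ℕ → ℤ) :
    shift i w = Function.extend (List.cons i) w 0 := by
  funext p
  rcases p with _ | ⟨j, q⟩
  · simp [shift, Function.extend_apply']
  · by_cases h : j = i
    · subst h
      simp [shift]
    · simp [shift, h, Function.extend_apply', Ne.symm h]

theorem extend_cons_cons {β : Type*} [Zero β] (i j : ℕ) (y : List ℕ → β) (q : List ℕ) :
    Function.extend (List.cons i) y 0 (j :: q) = if i = j then y q else 0 := by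
  by_cases h : i = j
  · subst h
    simp
  · simp [h, Function.extend_apply']

theorem castR_extend (i : ℕ) (w : List ℕ → ℤ) :
    castR (Function.extend (List.cons i) w 0) = Function.extend (List.cons i) (castR w) 0 := by
  funext p
  rw [castR_apply, Function.apply_extend (Int.cast : ℤ → ℝ)]
  congr 1
  funext q
  simp

theorem pairR_wt_principal (ts : List (CTree α)) (i : Fin ts.length) (x : List ℕ → ℝ) :
    pairR (node ts) (wt (node ts) [i.1]) x =
      total (node ts) x - total (ts.get i) (branch i x) := by
  have hterm : ∀ j : Fin ts.length, ∑ q ∈ uncS (ts.get j),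
      ((wt (node ts) [i.1] (j.1 :: q) : ℤ) : ℝ) * x (j.1 :: q)
        = total (ts.get j) (branch j x) - if i = j then total (ts.get j) (branch j x) else 0 := by
    intro j
    by_cases hij : i = j
    · subst hij
      simp [wt, total_apply]
    · have : i.1 ≠ j.1 := fun h => hij (Fin.ext h)
      simp +contextual [wt, total_apply, branch, cons_mem_uncS_node, this, hij]
  simp only [pairR, sum_uncS_node, hterm, total_node, Finset.sum_sub_distrib, Finset.sum_ite_eq,
    Finset.mem_univ, if_true]
  simp [wt, nil_mem_uncS_node, add_sub_assoc]

theorem pairR_wt_cons (ts : List (CTree α)) (i : Fin ts.length) {e : List ℕ} (he : e ≠ [])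
    (x : List ℕ → ℝ) :
    pairR (node ts) (wt (node ts) (i.1 :: e)) x =
      pairR (ts.get i) (wt (ts.get i) e) (branch i x) := by
  have hdrop : (i.1 :: e).dropLast = i.1 :: e.dropLast := List.dropLast_cons_of_ne_nil he
  have hterm : ∀ j : Fin ts.length, ∑ q ∈ uncS (ts.get j),
      ((wt (node ts) (i.1 :: e) (j.1 :: q) : ℤ) : ℝ) * x (j.1 :: q)
        = if i = j then pairR (ts.get i) (wt (ts.get i) e) (branch i x) else 0 := by
    intro j
    by_cases hij : i = j
    · subst hij
      simp +contextual [pairR, wt, hdrop, cons_mem_uncS_node, branch]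
    · have : i.1 ≠ j.1 := fun h => hij (Fin.ext h)
      simp [wt, hdrop, this, hij]
  simp only [pairR, sum_uncS_node, hterm, Finset.sum_ite_eq, Finset.mem_univ, if_true]
  simp [wt, hdrop]

theorem ne_nil_of_mem_edgeS {t : CTree α} {e : List ℕ} (he : e ∈ edgeS t) : e ≠ [] :=
  (Finset.mem_erase.1 he).1

theorem mem_dualCone_node {ts : List (CTree α)} {x : List ℕ → ℝ} :
    x ∈ dualCone (node ts) ↔ (∀ p ∉ uncS (node ts), x p = 0) ∧
      ∀ i : Fin ts.length, branch i x ∈ dualCone (ts.get i) ∧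
        total (ts.get i) (branch i x) ≤ total (node ts) x := by
  constructor
  · rintro ⟨hsupp, hedge⟩
    refine ⟨hsupp, fun i =>
      ⟨⟨fun q hq => hsupp _ (mt cons_mem_uncS_node.1 hq), fun e he => ?_⟩, ?_⟩⟩
    · have := hedge (i.1 :: e) (mem_edgeS_node.2 ⟨i, e, mem_vertS_iff.2 (Or.inr he), rfl⟩)
      rwa [pairR_wt_cons _ _ (ne_nil_of_mem_edgeS he)] at this
    · have := hedge [i.1] (mem_edgeS_node.2 ⟨i, [], mem_vertS_iff.2 (Or.inl rfl), rfl⟩)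
      rw [pairR_wt_principal] at this
      linarith
  · rintro ⟨hsupp, hbranch⟩
    refine ⟨hsupp, fun d hd => ?_⟩
    obtain ⟨i, e, he, rfl⟩ := mem_edgeS_node.1 hd
    rcases mem_vertS_iff.1 he with rfl | he
    · rw [pairR_wt_principal]
      linarith [(hbranch i).2]
    · rw [pairR_wt_cons _ _ (ne_nil_of_mem_edgeS he)]
      exact (hbranch i).1.2 e he

theorem eq_zero_of_mem_dualCone_leaf {a : α} {x : List ℕ → ℝ} (hx : x ∈ dualCone (leaf a)) :
    x = 0 :=
  funext fun p => hx.1 p (by simp)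

section ConeHull

variable {G : Set (List ℕ → ℤ)}

theorem mem_coneHull {x : List ℕ → ℝ} : x ∈ coneHull G ↔ ∃ (F : Finset (List ℕ → ℤ))
    (c : (List ℕ → ℤ) → ℝ), ↑F ⊆ G ∧ (∀ v ∈ F, 0 ≤ c v) ∧ x = ∑ v ∈ F, c v • castR v :=
  Iff.rfl

theorem coneHull_subset {K : Set (List ℕ → ℝ)} (h0 : 0 ∈ K)
    (hadd : ∀ x ∈ K, ∀ y ∈ K, x + y ∈ K) (hsmul : ∀ c : ℝ, 0 ≤ c → ∀ x ∈ K, c • x ∈ K)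
    (hG : ∀ v ∈ G, castR v ∈ K) : coneHull G ⊆ K := by
  intro x hx
  obtain ⟨F, c, hF, hc, rfl⟩ := mem_coneHull.1 hx
  exact Finset.sum_induction _ (· ∈ K) (fun x y hx hy => hadd x hx y hy) h0
    fun v hv => hsmul _ (hc v hv) _ (hG v (hF hv))

theorem zero_mem_coneHull : (0 : List ℕ → ℝ) ∈ coneHull G :=
  ⟨∅, 0, by simp, by simp, by simp⟩

theorem castR_mem_coneHull {v : List ℕ → ℤ} (hv : v ∈ G) : castR v ∈ coneHull G :=
  ⟨{v}, 1, by simpa using hv, by simp, by simp; rfl⟩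

theorem smul_mem_coneHull {c : ℝ} (hc : 0 ≤ c) {x : List ℕ → ℝ} (hx : x ∈ coneHull G) :
    c • x ∈ coneHull G := by
  obtain ⟨F, d, hF, hd, rfl⟩ := mem_coneHull.1 hx
  exact mem_coneHull.2 ⟨F, c • d, hF, fun v hv => mul_nonneg hc (hd v hv),
    by simp [Finset.smul_sum, smul_smul]⟩

theorem add_mem_coneHull {x y : List ℕ → ℝ} (hx : x ∈ coneHull G) (hy : y ∈ coneHull G) :
    x + y ∈ coneHull G := by
  obtain ⟨F₁, c₁, hF₁, hc₁, rfl⟩ := mem_coneHull.1 hx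
  obtain ⟨F₂, c₂, hF₂, hc₂, rfl⟩ := mem_coneHull.1 hy
  have hext : ∀ {F : Finset (List ℕ → ℤ)} (c : (List ℕ → ℤ) → ℝ), F ⊆ F₁ ∪ F₂ →
      ∑ v ∈ F₁ ∪ F₂, (if v ∈ F then c v else 0) • castR v = ∑ v ∈ F, c v • castR v := by
    intro F c hsub
    simp only [ite_smul, zero_smul, Finset.sum_ite_mem, Finset.inter_eq_right.2 hsub]
  refine mem_coneHull.2 ⟨F₁ ∪ F₂,
    fun v => (if v ∈ F₁ then c₁ v else 0) + (if v ∈ F₂ then c₂ v else 0),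
    by simpa using ⟨hF₁, hF₂⟩, fun v _ => ?_, ?_⟩
  · exact add_nonneg (by split_ifs <;> simp [hc₁ v, *]) (by split_ifs <;> simp [hc₂ v, *])
  · simp only [add_smul, Finset.sum_add_distrib, hext c₁ Finset.subset_union_left,
      hext c₂ Finset.subset_union_right]

theorem convex_coneHull : Convex ℝ (coneHull G) :=
  fun _ hx _ hy _ _ ha hb _ =>
    add_mem_coneHull (smul_mem_coneHull ha hx) (smul_mem_coneHull hb hy)

theorem smul_mem_coneHull_of_mem_convexHull {r : ℝ} (hr : 0 ≤ r) {z : List ℕ → ℝ}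
    (hz : z ∈ convexHull ℝ (castR '' G)) : r • z ∈ coneHull G :=
  smul_mem_coneHull hr <| convexHull_min (t := coneHull G)
    (Set.image_subset_iff.2 fun _ => castR_mem_coneHull) convex_coneHull hz

theorem nonneg_of_mem_coneHull (ℓ : (List ℕ → ℝ) →ₗ[ℝ] ℝ) (hℓ : ∀ v ∈ G, 0 ≤ ℓ (castR v))
    {y : List ℕ → ℝ} (hy : y ∈ coneHull G) : 0 ≤ ℓ y :=
  coneHull_subset (K := {y | 0 ≤ ℓ y}) (by simp)
    (fun x hx y hy => by simp only [Set.mem_ofPred_eq, map_add] at *; positivity)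
    (fun c hc x hx => by
      simp only [Set.mem_ofPred_eq, map_smul, smul_eq_mul] at *; positivity)
    hℓ hy

theorem exists_eq_smul_of_mem_coneHull (ℓ : (List ℕ → ℝ) →ₗ[ℝ] ℝ)
    (hℓ : ∀ v ∈ G, ℓ (castR v) = 1) {y : List ℕ → ℝ} (hy : y ∈ coneHull G) {r : ℝ}
    (hr : ℓ y ≤ r) : ∃ z ∈ convexHull ℝ (insert 0 (castR '' G)), y = r • z := by
  obtain ⟨F, c, hF, hc, rfl⟩ := mem_coneHull.1 hy
  have hℓy : ℓ (∑ v ∈ F, c v • castR v) = ∑ v ∈ F, c v := by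
    simp only [map_sum, map_smul, smul_eq_mul]
    exact Finset.sum_congr rfl fun v hv => by rw [hℓ v (hF hv), mul_one]
  rw [hℓy] at hr
  have hzero : (0 : List ℕ → ℝ) ∈ convexHull ℝ (insert 0 (castR '' G)) :=
    subset_convexHull ℝ _ (Set.mem_insert _ _)
  rcases (Finset.sum_nonneg hc).eq_or_lt with h0 | hpos
  · refine ⟨0, hzero, ?_⟩
    rw [smul_zero]
    refine Finset.sum_eq_zero fun v hv => ?_
    rw [(Finset.sum_eq_zero_iff_of_nonneg hc).1 h0.symm v hv, zero_smul]
  · have hr0 : 0 < r := by linarith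
    refine ⟨((∑ v ∈ F, c v) / r) • F.centerMass c castR, ?_, ?_⟩
    · refine (convex_convexHull ℝ _).smul_mem_of_zero_mem hzero ?_
        ⟨by positivity, (div_le_one hr0).2 (by linarith)⟩
      exact convexHull_mono (Set.subset_insert _ _) <|
        F.centerMass_mem_convexHull hc hpos fun v hv => Set.mem_image_of_mem _ (hF hv)
    · rw [Finset.centerMass, smul_smul, smul_smul, mul_div_cancel₀ _ hr0.ne',
        mul_inv_cancel₀ hpos.ne', one_smul]

end ConeHull

def graft {n : ℕ} (J : Finset (Fin n)) (w : Fin n → List ℕ → ℤ) : List ℕ → ℤ :=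
  e0 + ∑ i ∈ J, (shift i.1 (w i) - e0)

theorem graft_nil {n : ℕ} (J : Finset (Fin n)) (w : Fin n → List ℕ → ℤ) :
    graft J w [] = 1 - J.card := by
  simp [graft, shift, e0, sub_eq_add_neg]

theorem branch_graft {n : ℕ} (J : Finset (Fin n)) (w : Fin n → List ℕ → ℤ) (i : Fin n) :
    branch i.1 (graft J w) = if i ∈ J then w i else 0 := by
  funext q
  simp only [graft, branch, Pi.add_apply, Finset.sum_apply, Pi.sub_apply, shift, e0]
  by_cases hi : i ∈ J <;> simp [Fin.val_eq_val, hi]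

theorem graft_cons_of_le {n : ℕ} (J : Finset (Fin n)) (w : Fin n → List ℕ → ℤ) {j : ℕ}
    (hj : n ≤ j) (q : List ℕ) : graft J w (j :: q) = 0 := by
  simp only [graft, Pi.add_apply, Finset.sum_apply, Pi.sub_apply, shift, e0]
  simp [fun i : Fin n => (i.2.trans_le hj).ne']

@[simp]
theorem Gset_leaf (a : α) : Gset (leaf a) = ∅ := by
  rw [Gset]

theorem mem_Gset_node {ts : List (CTree α)} {v : List ℕ → ℤ} :
    v ∈ Gset (node ts) ↔ ∃ (J : Finset (Fin ts.length)) (w : Fin ts.length → List ℕ → ℤ),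
      (∀ i ∈ J, (ts.get i).isNodeB = true ∧ w i ∈ Gset (ts.get i)) ∧ v = graft J w := by
  rw [Gset]
  rfl

theorem isNodeB_of_mem_Gset {t : CTree α} {v : List ℕ → ℤ} (hv : v ∈ Gset t) :
    t.isNodeB = true := by
  cases t with
  | leaf a => simp at hv
  | node ts => rfl

theorem branch_eq_zero_or_mem_Gset {ts : List (CTree α)} {v : List ℕ → ℤ}
    (hv : v ∈ Gset (node ts)) (i : Fin ts.length) :
    branch i v = 0 ∨ branch i v ∈ Gset (ts.get i) := by
  obtain ⟨J, w, hJ, rfl⟩ := mem_Gset_node.1 hv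
  rw [branch_graft]
  split_ifs with hi
  exacts [Or.inr (hJ i hi).2, Or.inl rfl]

theorem Gset_support {t : CTree α} {v : List ℕ → ℤ} (hv : v ∈ Gset t) :
    ∀ p ∉ uncS t, v p = 0 := by
  induction t using induction_on_children generalizing v with
  | leaf a => simp at hv
  | node ts ih =>
    obtain ⟨J, w, hJ, rfl⟩ := mem_Gset_node.1 hv
    rintro (_ | ⟨j, q⟩) hp
    · exact absurd (nil_mem_uncS_node ts) hp
    by_cases hj : j < ts.length
    · have hq : q ∉ uncS (ts.get ⟨j, hj⟩) := mt cons_mem_uncS_node.2 hp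
      have := congrFun (branch_graft J w ⟨j, hj⟩) q
      simp only [branch] at this
      rw [this]
      split_ifs with hi
      exacts [ih _ (hJ _ hi).2 q hq, rfl]
    · exact graft_cons_of_le J w (not_lt.1 hj) q

theorem total_castR_of_mem_Gset {t : CTree α} {v : List ℕ → ℤ} (hv : v ∈ Gset t) :
    total t (castR v) = 1 := by
  induction t using induction_on_children generalizing v with
  | leaf a => simp at hv
  | node ts ih =>
    obtain ⟨J, w, hJ, rfl⟩ := mem_Gset_node.1 hv
    have hbranch : ∀ i : Fin ts.length,
        total (ts.get i) (branch i (castR (graft J w))) = if i ∈ J then 1 else 0 := by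
      intro i
      rw [branch_castR, branch_graft]
      split_ifs with hi
      exacts [ih i (hJ i hi).2, by simp]
    rw [total_node, Finset.sum_congr rfl fun i _ => hbranch i, Finset.sum_boole]
    simp [graft_nil]

theorem total_branch_castR_of_mem_Gset {ts : List (CTree α)} {v : List ℕ → ℤ}
    (hv : v ∈ Gset (node ts)) (i : Fin ts.length) :
    (branch i v = 0 ∧ total (ts.get i) (castR (branch i v)) = 0) ∨
      (branch i v ∈ Gset (ts.get i) ∧ total (ts.get i) (castR (branch i v)) = 1) := by
  rcases branch_eq_zero_or_mem_Gset hv i with h | h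
  · exact Or.inl ⟨h, by simp [h]⟩
  · exact Or.inr ⟨h, total_castR_of_mem_Gset h⟩

theorem zero_mem_dualCone (t : CTree α) : (0 : List ℕ → ℝ) ∈ dualCone t :=
  ⟨fun _ _ => rfl, fun _ _ => by simp [pairR]⟩

theorem add_mem_dualCone {t : CTree α} {x y : List ℕ → ℝ} (hx : x ∈ dualCone t)
    (hy : y ∈ dualCone t) : x + y ∈ dualCone t := by
  refine ⟨fun p hp => by simp [hx.1 p hp, hy.1 p hp], fun d hd => ?_⟩
  have : pairR t (wt t d) (x + y) = pairR t (wt t d) x + pairR t (wt t d) y := by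
    simp [pairR, mul_add, Finset.sum_add_distrib]
  rw [this]
  exact add_nonneg (hx.2 d hd) (hy.2 d hd)

theorem smul_mem_dualCone {t : CTree α} {c : ℝ} (hc : 0 ≤ c) {x : List ℕ → ℝ}
    (hx : x ∈ dualCone t) : c • x ∈ dualCone t := by
  refine ⟨fun p hp => by simp [hx.1 p hp], fun d hd => ?_⟩
  have : pairR t (wt t d) (c • x) = c * pairR t (wt t d) x := by
    simp [pairR, Finset.mul_sum, mul_left_comm]
  rw [this]
  exact mul_nonneg hc (hx.2 d hd)

theorem castR_mem_dualCone_of_mem_Gset {t : CTree α} {v : List ℕ → ℤ} (hv : v ∈ Gset t) :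
    castR v ∈ dualCone t := by
  induction t using induction_on_children generalizing v with
  | leaf a => simp at hv
  | node ts ih =>
    refine mem_dualCone_node.2 ⟨fun p hp => by simp [Gset_support hv p hp], fun i => ?_⟩
    rw [branch_castR, total_castR_of_mem_Gset hv]
    rcases total_branch_castR_of_mem_Gset hv i with ⟨hzero, htotal⟩ | ⟨hG, htotal⟩
    · rw [htotal, hzero, map_zero]
      exact ⟨zero_mem_dualCone _, zero_le_one⟩
    · exact ⟨ih i hG, htotal.le⟩

theorem coneHull_Gset_subset_dualCone (t : CTree α) : coneHull (Gset t) ⊆ dualCone t :=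
  coneHull_subset (zero_mem_dualCone t) (fun _ hx _ hy => add_mem_dualCone hx hy)
    (fun _ hc _ hx => smul_mem_dualCone hc hx) fun _ => castR_mem_dualCone_of_mem_Gset

def liftBranch (ts : List (CTree α)) (i : Fin ts.length) :
    (List ℕ → ℝ) →ₗ[ℝ] (List ℕ → ℝ) :=
  Function.ExtendByZero.linearMap ℝ (List.cons i.1) - (total (ts.get i)).smulRight (castR e0)

theorem liftBranch_apply (ts : List (CTree α)) (i : Fin ts.length) (y : List ℕ → ℝ) :
    liftBranch ts i y = Function.extend (List.cons i.1) y 0 - total (ts.get i) y • castR e0 :=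
  rfl

theorem liftBranch_castR {ts : List (CTree α)} {i : Fin ts.length} {w : List ℕ → ℤ}
    (hw : w ∈ Gset (ts.get i)) : liftBranch ts i (castR w) = castR (shift i.1 w - e0) := by
  rw [liftBranch_apply, total_castR_of_mem_Gset hw, one_smul, map_sub, shift_eq_extend,
    castR_extend]

theorem eq_total_smul_add_sum_liftBranch {ts : List (CTree α)} {x : List ℕ → ℝ}
    (hx : ∀ p ∉ uncS (node ts), x p = 0) :
    x = total (node ts) x • castR e0 + ∑ i, liftBranch ts i (branch i x) := by
  refine funext_branch ts.length ?_ (fun j => funext fun q => ?_) fun j hj q => ?_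
  · simp [liftBranch_apply, total_node, Finset.sum_apply, e0, Function.extend_apply']
  · simp [branch, liftBranch_apply, Finset.sum_apply, e0, extend_cons_cons, Fin.val_eq_val]
  · have hne : ∀ i : Fin ts.length, i.1 ≠ j := fun i => (i.2.trans_le hj).ne
    simp [hx _ (cons_notMem_uncS_node hj q), liftBranch_apply, Finset.sum_apply, e0, hne]

open scoped Pointwise in
theorem castR_e0_add_sum_subset_image_Gset (ts : List (CTree α)) :
    {castR e0} + ∑ i, liftBranch ts i '' insert 0 (castR '' Gset (ts.get i)) ⊆
      castR '' Gset (node ts) := by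
  rintro _ ⟨_, rfl, _, hh, rfl⟩
  obtain ⟨h, hmem, rfl⟩ := (Set.mem_finsetSum _ _ _).1 hh
  have hw : ∀ i, ∃ w, h i ≠ 0 → w ∈ Gset (ts.get i) ∧ h i = castR (shift i.1 w - e0) := by
    intro i
    obtain ⟨y, hy, hyh⟩ := hmem (Finset.mem_univ i)
    rcases hy with rfl | ⟨w, hwG, rfl⟩
    · exact ⟨0, fun hne => absurd (hyh ▸ map_zero _) hne⟩
    · exact ⟨w, fun _ => ⟨hwG, hyh ▸ liftBranch_castR hwG⟩⟩
  choose w hw using hw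
  refine ⟨graft {i | h i ≠ 0} w, mem_Gset_node.2 ⟨_, w, fun i hi => ?_, rfl⟩, ?_⟩
  · have hwi := (hw i (Finset.mem_filter.1 hi).2).1
    exact ⟨isNodeB_of_mem_Gset hwi, hwi⟩
  · rw [graft, map_add, map_sum, ← Finset.sum_filter_ne_zero Finset.univ]
    congr 1
    exact Finset.sum_congr rfl fun i hi => ((hw i (Finset.mem_filter.1 hi).2).2).symm

open scoped Pointwise in
theorem castR_e0_add_sum_liftBranch_mem_convexHull (ts : List (CTree α))
    {y : Fin ts.length → List ℕ → ℝ}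
    (hy : ∀ i, y i ∈ convexHull ℝ (insert 0 (castR '' Gset (ts.get i)))) :
    castR e0 + ∑ i, liftBranch ts i (y i) ∈ convexHull ℝ (castR '' Gset (node ts)) := by
  refine convexHull_mono (castR_e0_add_sum_subset_image_Gset ts) ?_
  rw [convexHull_add, convexHull_singleton, convexHull_sum]
  refine Set.add_mem_add rfl (Set.finsetSum_mem_finsetSum _ _ _ fun i _ => ?_)
  rw [← LinearMap.image_convexHull]
  exact Set.mem_image_of_mem _ (hy i)

theorem dualCone_subset_coneHull_Gset {t : CTree α} (ht : ∀ p, t.sub p ≠ some (node [])) :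
    dualCone t ⊆ coneHull (Gset t) := by
  induction t using induction_on_children with
  | leaf a =>
    intro x hx
    rw [eq_zero_of_mem_dualCone_leaf hx]
    exact zero_mem_coneHull
  | node ts ih =>
    intro x hx
    obtain ⟨hsupp, hbranch⟩ := mem_dualCone_node.1 hx
    have hcone : ∀ i, branch i x ∈ coneHull (Gset (ts.get i)) := fun i =>
      ih i (fun p => by rw [← sub_node_cons]; exact ht _) (hbranch i).1
    obtain ⟨i₀⟩ : Nonempty (Fin ts.length) :=
      ⟨⟨0, List.length_pos_iff.2 fun h => ht [] (by simp [h, sub])⟩⟩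
    have hT : 0 ≤ total (node ts) x :=
      (nonneg_of_mem_coneHull _ (fun _ hv => (total_castR_of_mem_Gset hv).symm ▸ zero_le_one)
        (hcone i₀)).trans (hbranch i₀).2
    choose y hy hxy using fun i =>
      exists_eq_smul_of_mem_coneHull _ (fun _ => total_castR_of_mem_Gset) (hcone i) (hbranch i).2
    rw [eq_total_smul_add_sum_liftBranch hsupp]
    simp_rw [hxy, map_smul, ← Finset.smul_sum, ← smul_add]
    exact smul_mem_coneHull_of_mem_convexHull hT
      (castR_e0_add_sum_liftBranch_mem_convexHull ts hy)

theorem eq_of_sum_mul_eq_of_mem_zero_one {ι : Type*} {s : Finset ι} {c b : ι → ℝ} {b₀ : ℝ}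
    (hc : ∀ j ∈ s, 0 < c j) (hc1 : ∑ j ∈ s, c j = 1) (hb : ∀ j ∈ s, b j = 0 ∨ b j = 1)
    (hb₀ : b₀ = 0 ∨ b₀ = 1) (h : ∑ j ∈ s, c j * b j = b₀) : ∀ j ∈ s, b j = b₀ := by
  have hb0 : ∀ j ∈ s, 0 ≤ b j := fun j hj => by rcases hb j hj with h | h <;> simp [h]
  have hb1 : ∀ j ∈ s, 0 ≤ 1 - b j := fun j hj => by rcases hb j hj with h | h <;> simp [h]
  intro j hj
  rcases hb₀ with rfl | rfl
  · have := (Finset.sum_eq_zero_iff_of_nonneg fun j hj => mul_nonneg (hc j hj).le (hb0 j hj)).1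
      h j hj
    exact (mul_eq_zero.1 this).resolve_left (hc j hj).ne'
  · have h' : ∑ j ∈ s, c j * (1 - b j) = 0 := by
      simp [mul_sub, Finset.sum_sub_distrib, h, hc1]
    have := (Finset.sum_eq_zero_iff_of_nonneg fun j hj => mul_nonneg (hc j hj).le (hb1 j hj)).1
      h' j hj
    linarith [(mul_eq_zero.1 this).resolve_left (hc j hj).ne']

theorem branch_sum_smul {ι : Type*} (i : ℕ) (s : Finset ι) (c : ι → ℝ) (x : ι → List ℕ → ℝ) :
    branch i (∑ j ∈ s, c j • x j) = ∑ j ∈ s, c j • branch i (x j) := by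
  funext q
  simp [branch, Finset.sum_apply]

section Minimality

variable {ι : Type*} {s : Finset ι} {c : ι → ℝ} {u : ι → List ℕ → ℤ}

theorem sum_eq_one_of_castR_eq_sum_smul {t : CTree α} {v : List ℕ → ℤ} (hv : v ∈ Gset t)
    (hu : ∀ j ∈ s, u j ∈ Gset t) (h : castR v = ∑ j ∈ s, c j • castR (u j)) :
    ∑ j ∈ s, c j = 1 := by
  have := congrArg (total t) h
  rw [total_castR_of_mem_Gset hv, map_sum] at this
  rw [this]
  exact Finset.sum_congr rfl fun j hj => by
    rw [map_smul, total_castR_of_mem_Gset (hu j hj), smul_eq_mul, mul_one]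

/-- Branch totals on `G(Γ)` are `0` or `1`, and a convex combination of such numbers is `0` or `1`
only if all of them agree. -/
theorem total_branch_eq_of_castR_eq_sum_smul {ts : List (CTree α)} {v : List ℕ → ℤ}
    (hv : v ∈ Gset (node ts)) (hc : ∀ j ∈ s, 0 < c j) (hu : ∀ j ∈ s, u j ∈ Gset (node ts))
    (h : castR v = ∑ j ∈ s, c j • castR (u j)) (i : Fin ts.length) :
    ∀ j ∈ s,
      total (ts.get i) (castR (branch i (u j))) = total (ts.get i) (castR (branch i v)) := by
  refine eq_of_sum_mul_eq_of_mem_zero_one hc (sum_eq_one_of_castR_eq_sum_smul hv hu h)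
    (fun j hj => ?_) ?_ ?_
  · rcases total_branch_castR_of_mem_Gset (hu j hj) i with h | h
    exacts [Or.inl h.2, Or.inr h.2]
  · rcases total_branch_castR_of_mem_Gset hv i with h | h
    exacts [Or.inl h.2, Or.inr h.2]
  · simp [← branch_castR, h, branch_sum_smul, map_sum]

theorem branch_eq_zero_iff_total_eq_zero {ts : List (CTree α)} {v : List ℕ → ℤ}
    (hv : v ∈ Gset (node ts)) (i : Fin ts.length) :
    branch i v = 0 ↔ total (ts.get i) (castR (branch i v)) = 0 := by
  rcases total_branch_castR_of_mem_Gset hv i with ⟨h0, -⟩ | ⟨-, ht⟩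
  · simp [h0]
  · simp only [ht, one_ne_zero, iff_false]
    rintro h0
    simp [h0] at ht

theorem eq_of_forall_branch_eq {ts : List (CTree α)} {u v : List ℕ → ℤ}
    (hu : u ∈ Gset (node ts)) (hv : v ∈ Gset (node ts))
    (h : ∀ i : Fin ts.length, branch i u = branch i v) : u = v := by
  have hroot : castR u [] = castR v [] := by
    have hu1 := total_castR_of_mem_Gset hu
    have hv1 := total_castR_of_mem_Gset hv
    simp only [total_node, branch_castR, h] at hu1 hv1
    linarith
  refine funext_branch ts.length (by simpa using hroot) h fun k hk q => ?_
  rw [Gset_support hu _ (cons_notMem_uncS_node hk q),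
    Gset_support hv _ (cons_notMem_uncS_node hk q)]

theorem eq_of_castR_eq_sum_smul {t : CTree α} {v : List ℕ → ℤ} (hv : v ∈ Gset t)
    (hc : ∀ j ∈ s, 0 < c j) (hu : ∀ j ∈ s, u j ∈ Gset t)
    (h : castR v = ∑ j ∈ s, c j • castR (u j)) : ∀ j ∈ s, u j = v := by
  induction t using induction_on_children generalizing v u with
  | leaf a => simp at hv
  | node ts ih =>
    have hzero : ∀ i : Fin ts.length, ∀ j ∈ s, branch i (u j) = 0 ↔ branch i v = 0 := by
      intro i j hj
      rw [branch_eq_zero_iff_total_eq_zero (hu j hj), branch_eq_zero_iff_total_eq_zero hv,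
        total_branch_eq_of_castR_eq_sum_smul hv hc hu h i j hj]
    intro j hj
    refine eq_of_forall_branch_eq (hu j hj) hv fun i => ?_
    by_cases hv0 : branch i v = 0
    · rw [hv0, (hzero i j hj).2 hv0]
    · have hG : ∀ w ∈ Gset (node ts), branch i w ≠ 0 → branch i w ∈ Gset (ts.get i) :=
        fun w hw => (branch_eq_zero_or_mem_Gset hw i).resolve_left
      refine ih i (hG v hv hv0) (fun k hk => hG _ (hu k hk) (mt (hzero i k hk).1 hv0)) ?_ j hj
      rw [← branch_castR, h, branch_sum_smul]
      rfl

end Minimality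

theorem mem_of_castR_mem_coneHull {t : CTree α} {S : Set (List ℕ → ℤ)} (hS : S ⊆ Gset t)
    {v : List ℕ → ℤ} (hv : v ∈ Gset t) (h : castR v ∈ coneHull S) : v ∈ S := by
  obtain ⟨F, c, hF, hc, hvF⟩ := mem_coneHull.1 h
  have hvF' : castR v = ∑ u ∈ F with 0 < c u, c u • castR u := by
    rw [Finset.sum_filter_of_ne fun u hu hne => (hc u hu).lt_of_ne' (left_ne_zero_of_smul hne)]
    exact hvF
  obtain ⟨u, hu⟩ : (F.filter (0 < c ·)).Nonempty := by
    by_contra hempty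
    rw [Finset.not_nonempty_iff_eq_empty.1 hempty, Finset.sum_empty] at hvF'
    simpa [hvF'] using total_castR_of_mem_Gset hv
  have hSu : ∀ u ∈ F.filter (0 < c ·), u ∈ S := fun u hu => hF (Finset.mem_filter.1 hu).1
  rw [← eq_of_castR_eq_sum_smul hv (fun u hu => (Finset.mem_filter.1 hu).2)
    (fun u hu => hS (hSu u hu)) hvF' u hu]
  exact hSu u hu

end CTree

/-- The dual cone `C(Γ)` equals the convex cone generated by `G(Γ)`,
and `G(Γ)` is a minimal generating set: no proper subset of `G(Γ)` generates `C(Γ)`. -/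
theorem dualCone_eq_coneHull_Gset_and_minimal {α : Type} (t : CTree α)
    (ht : t.IsColoredTree) :
    CTree.dualCone t = CTree.coneHull (CTree.Gset t) ∧
    ∀ S ⊆ CTree.Gset t, CTree.coneHull S = CTree.dualCone t → S = CTree.Gset t := by
  have hcone : CTree.dualCone t = CTree.coneHull (CTree.Gset t) :=
    (CTree.dualCone_subset_coneHull_Gset ht.1).antisymm (CTree.coneHull_Gset_subset_dualCone t)
  refine ⟨hcone, fun S hS hSC => hS.antisymm fun v hv => ?_⟩
  refine CTree.mem_of_castR_mem_coneHull hS hv ?_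
  rw [hSC]
  exact CTree.castR_mem_dualCone_of_mem_Gset hv
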